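/- arXiv:1004.1430 — 5 statements merged into one kernel-verified Lean document; each statement's English description precedes it below -/
import Mathlib

section
/- Let a < b be integers and k an integer. In the hexagonal grid, the distance from the vertex (k,a) to the horizontal line L_b = {(x,b) : x ∈ ℤ} equals 2(b−a)−1 if a+k is even, and 2(b−a) if a+k is odd. -/
/-- The hexagonal grid in its brick wall representation: vertex set ℤ×ℤ,
with (x,y) adjacent to (x±1,y) always, and to (x,y+1) if x+y is even
(equivalently, to (x,y-1) if x+y is odd). -/
def hexGraph : SimpleGraph (ℤ × ℤ) where
  Adj u v := (u.2 = v.2 ∧ (u.1 = v.1 + 1 ∨ v.1 = u.1 + 1)) ∨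
    (u.1 = v.1 ∧ ((v.2 = u.2 + 1 ∧ Even (u.1 + u.2)) ∨ (u.2 = v.2 + 1 ∧ Even (v.1 + v.2))))
  symm := by
    constructor
    rintro u v (⟨h1, h2 | h2⟩ | ⟨h1, ⟨h2, h3⟩ | ⟨h2, h3⟩⟩)
    · exact Or.inl ⟨h1.symm, Or.inr h2⟩
    · exact Or.inl ⟨h1.symm, Or.inl h2⟩
    · exact Or.inr ⟨h1.symm, Or.inr ⟨h2, h3⟩⟩
    · exact Or.inr ⟨h1.symm, Or.inl ⟨h2, h3⟩⟩
  loopless := by constructor; rintro ⟨x, y⟩ (⟨_, h | h⟩ | ⟨_, ⟨h, _⟩ | ⟨h, _⟩⟩) <;> omega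

/-- The graph distance from a vertex to the horizontal line L_k = {(x,k) : x ∈ ℤ}. -/
noncomputable def hexLineDist (u : ℤ × ℤ) (k : ℤ) : ℕ :=
  sInf {n : ℕ | ∃ x : ℤ, hexGraph.dist u (x, k) = n}

/-!
The function `hexPot b (x, y) = 2 (b - y) - 1 + (x + y) mod 2` changes by at most one along
every edge of the grid and is `≤ 0` on the line `y = b`, so it bounds the distance to that line
from below. Conversely, from a vertex with `x + y` even, alternating an upward and a rightward
step reaches the line in exactly `hexPot` steps; from an odd vertex, one rightward step first
makes it even.
-/

namespace SimpleGraph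

theorem Walk.le_add_length_of_adj {V : Type*} {G : SimpleGraph V} {f : V → ℤ}
    (hf : ∀ u v, G.Adj u v → f u ≤ f v + 1) {u v : V} (w : G.Walk u v) :
    f u ≤ f v + w.length := by
  induction w with
  | nil => simp
  | cons h _ ih =>
    have := hf _ _ h
    rw [Walk.length_cons]
    push_cast
    omega

end SimpleGraph

open SimpleGraph

def hexPot (b : ℤ) (u : ℤ × ℤ) : ℤ := 2 * (b - u.2) - 1 + (u.1 + u.2) % 2

lemma hexPot_le_of_adj (b : ℤ) {u v : ℤ × ℤ} (h : hexGraph.Adj u v) :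
    hexPot b u ≤ hexPot b v + 1 := by
  obtain ⟨x, y⟩ := u
  obtain ⟨x', y'⟩ := v
  simp only [hexGraph, Int.even_iff] at h
  simp only [hexPot]
  omega

lemma hexPot_line_nonpos (b x : ℤ) : hexPot b (x, b) ≤ 0 := by
  simp only [hexPot]
  omega

lemma hexGraph_adj_up {x y : ℤ} (h : Even (x + y)) : hexGraph.Adj (x, y) (x, y + 1) :=
  Or.inr ⟨rfl, Or.inl ⟨rfl, h⟩⟩

lemma hexGraph_adj_right (x y : ℤ) : hexGraph.Adj (x, y) (x + 1, y) :=
  Or.inl ⟨rfl, Or.inr rfl⟩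

lemma hexGraph_reachable_horizontal (x x' y : ℤ) : hexGraph.Reachable (x, y) (x', y) := by
  have from_zero : ∀ x : ℤ, hexGraph.Reachable (0, y) (x, y) := by
    intro x
    induction x using Int.induction_on with
    | zero => rfl
    | succ i ih => exact ih.trans (hexGraph_adj_right i y).reachable
    | pred i ih =>
      exact ih.trans (by simpa using (hexGraph_adj_right (-(i : ℤ) - 1) y).reachable.symm)
  exact (from_zero x).symm.trans (from_zero x')

lemma hexLineDist_le {u : ℤ × ℤ} {x b : ℤ} (w : hexGraph.Walk u (x, b)) :
    hexLineDist u b ≤ w.length := by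
  refine (Nat.sInf_le ?_).trans (hexGraph.dist_le w)
  exact ⟨x, rfl⟩

lemma hexPot_le_hexLineDist {u : ℤ × ℤ} {x b : ℤ} (hu : hexGraph.Reachable u (x, b)) :
    hexPot b u ≤ hexLineDist u b := by
  obtain ⟨x₁, hx₁⟩ : hexLineDist u b ∈ {n : ℕ | ∃ x : ℤ, hexGraph.dist u (x, b) = n} :=
    Nat.sInf_mem ⟨hexGraph.dist u (x, b), x, rfl⟩
  obtain ⟨p, hp⟩ := (hu.trans (hexGraph_reachable_horizontal x x₁ b)).exists_walk_length_eq_dist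
  have := p.le_add_length_of_adj fun _ _ ↦ hexPot_le_of_adj b
  have := hexPot_line_nonpos b x₁
  rw [hp, hx₁] at *
  omega

lemma hexGraph_exists_walk_up {x y : ℤ} (h : Even (x + y)) (n : ℕ) :
    ∃ x' : ℤ, ∃ w : hexGraph.Walk (x, y) (x', y + n + 1), w.length = 2 * n + 1 := by
  induction n generalizing x y with
  | zero => exact ⟨x, (hexGraph_adj_up h).toWalk.copy rfl (by simp), by simp⟩
  | succ n ih =>
    obtain ⟨x', w, hw⟩ := ih (x := x + 1) (y := y + 1) (by rw [Int.even_iff] at h ⊢; omega)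
    refine ⟨x', (Walk.cons (hexGraph_adj_up h) (Walk.cons (hexGraph_adj_right x (y + 1)) w)).copy
      rfl (by congr 1; push_cast; ring), ?_⟩
    simp only [Walk.length_copy, Walk.length_cons, hw]
    ring

lemma hexGraph_exists_walk_to_line {a b : ℤ} (k : ℤ) (hab : a < b) :
    ∃ x : ℤ, ∃ w : hexGraph.Walk (k, a) (x, b), (w.length : ℤ) = hexPot b (k, a) := by
  obtain ⟨n, hn⟩ := Int.eq_ofNat_of_zero_le (by omega : 0 ≤ b - a - 1)
  have hb : a + n + 1 = b := by omega
  rcases Int.even_or_odd (k + a) with he | ho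
  · obtain ⟨x, w, hw⟩ := hexGraph_exists_walk_up he n
    refine ⟨x, w.copy rfl (by rw [hb]), ?_⟩
    rw [Walk.length_copy, hw, hexPot, Int.even_iff.mp he]
    push_cast
    omega
  · obtain ⟨x, w, hw⟩ := hexGraph_exists_walk_up (x := k + 1) (y := a)
      (by rw [Int.odd_iff] at ho; rw [Int.even_iff]; omega) n
    refine ⟨x, (Walk.cons (hexGraph_adj_right k a) w).copy rfl (by rw [hb]), ?_⟩
    rw [Walk.length_copy, Walk.length_cons, hw, hexPot, Int.odd_iff.mp ho]
    push_cast
    omega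

/-- distance from (k,a) up to the line L_b for a < b. -/
theorem hex_vertex_line_dist_up (a b k : ℤ) (hab : a < b) :
    (hexLineDist (k, a) b : ℤ) = if Even (a + k) then 2 * (b - a) - 1 else 2 * (b - a) := by
  obtain ⟨x, w, hw⟩ := hexGraph_exists_walk_to_line k hab
  have upper := hexLineDist_le w
  have lower := hexPot_le_hexLineDist w.reachable
  have hpot : hexPot b (k, a) = if Even (a + k) then 2 * (b - a) - 1 else 2 * (b - a) := by
    simp only [hexPot, Int.even_iff]
    split_ifs <;> omega
  omega
end

section
/- Let k be a positive integer and (x,y) a vertex of the hexagonal grid with x+y even. Then there exist paths of length exactly 2k+1 from (x,y) to every vertex in {(x−k+2j, y+k+1) : j=0,…,k} and to every vertex in {(x−k−1+2j, y−k) : j=0,…,k+1}. -/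
/-!
From a vertex with odd coordinate sum, a horizontal step followed by an upward edge is a zigzag
of length 2 to `(x ± 1, y + 1)`, again a vertex with odd coordinate sum; so `m` zigzags reach
every `(x - m + 2j, y + m)` with `j ≤ m`. The reflection `(x, y) ↦ (x + 1, -y)` turns these into
downward zigzags from vertices with even coordinate sum. The first family of targets is reached
by one upward edge followed by `k` upward zigzags, the second by `k` downward zigzags followed by
one horizontal step.
-/

namespace hexGraph

open SimpleGraph

lemma adj_add_one (a b : ℤ) : hexGraph.Adj (a, b) (a + 1, b) :=
  Or.inl ⟨rfl, Or.inr rfl⟩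

lemma adj_sub_one (a b : ℤ) : hexGraph.Adj (a, b) (a - 1, b) :=
  Or.inl ⟨rfl, Or.inl (sub_add_cancel a 1).symm⟩

lemma adj_up (a b : ℤ) (h : Even (a + b)) : hexGraph.Adj (a, b) (a, b + 1) :=
  Or.inr ⟨rfl, Or.inl ⟨rfl, h⟩⟩

def reflect : hexGraph →g hexGraph where
  toFun u := (u.1 + 1, -u.2)
  map_rel' := by
    rintro ⟨a, b⟩ ⟨c, d⟩ h
    simp only [hexGraph, Int.even_iff] at h ⊢
    omega

lemma exists_walk_up_of_odd {a b : ℤ} (h : Odd (a + b)) (e : ℤ) (he : e = 1 ∨ e = -1) :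
    ∃ p : hexGraph.Walk (a, b) (a + e, b + 1), p.length = 2 := by
  have hside : hexGraph.Adj (a, b) (a + e, b) := by
    rcases he with rfl | rfl
    · exact adj_add_one a b
    · exact adj_sub_one a b
  have hup : hexGraph.Adj (a + e, b) (a + e, b + 1) :=
    adj_up _ _ <| by
      rcases he with rfl | rfl <;> simp only [Int.even_iff, Int.odd_iff] at * <;> omega
  exact ⟨.cons hside (.cons hup .nil), rfl⟩

lemma exists_walk_zigzag_up {a b : ℤ} (h : Odd (a + b)) {m j : ℕ} (hj : j ≤ m) :
    ∃ p : hexGraph.Walk (a, b) (a + 2 * j - m, b + m), p.length = 2 * m := by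
  induction m generalizing a b j with
  | zero => exact ⟨Walk.nil.copy rfl (by simp_all), by simp⟩
  | succ m ih =>
    obtain ⟨e, j', he, hj', hend⟩ : ∃ (e : ℤ) (j' : ℕ), (e = 1 ∨ e = -1) ∧ j' ≤ m ∧
        a + e + 2 * j' - m = a + 2 * j - (m + 1 : ℕ) := by
      rcases le_or_gt j m with hjm | hjm
      · exact ⟨-1, j, Or.inr rfl, hjm, by push_cast; ring⟩
      · exact ⟨1, m, Or.inl rfl, le_rfl, by push_cast; omega⟩
    obtain ⟨p, hp⟩ := exists_walk_up_of_odd h e he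
    obtain ⟨q, hq⟩ := ih (a := a + e) (b := b + 1)
      (by rcases he with rfl | rfl <;> simp only [Int.odd_iff] at * <;> omega) hj'
    refine ⟨(p.append q).copy rfl (Prod.ext hend (by push_cast; ring)), ?_⟩
    simp only [Walk.length_copy, Walk.length_append, hp, hq]
    ring

lemma exists_walk_zigzag_down {a b : ℤ} (h : Even (a + b)) {m j : ℕ} (hj : j ≤ m) :
    ∃ p : hexGraph.Walk (a, b) (a + 2 * j - m, b - m), p.length = 2 * m := by
  obtain ⟨p, hp⟩ := exists_walk_zigzag_up (a := a - 1) (b := -b)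
    (by simp only [Int.even_iff, Int.odd_iff] at *; omega) hj
  refine ⟨(p.map reflect).copy (Prod.ext (by simp [reflect]) (by simp [reflect]))
    (Prod.ext (by simp [reflect]; ring) (by simp [reflect]; ring)), ?_⟩
  simp [hp]

end hexGraph

open hexGraph in
theorem hex_odd_paths_even_vertex_general (k : ℕ) (x y : ℤ) (hxy : Even (x + y)) :
    (∀ j : ℕ, j ≤ k →
      ∃ p : hexGraph.Walk (x, y) (x - k + 2 * j, y + k + 1), p.length = 2 * k + 1) ∧
    (∀ j : ℕ, j ≤ k + 1 →
      ∃ p : hexGraph.Walk (x, y) (x - k - 1 + 2 * j, y - k), p.length = 2 * k + 1) := by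
  constructor
  · intro j hj
    obtain ⟨p, hp⟩ := exists_walk_zigzag_up (a := x) (b := y + 1)
      (by rw [← add_assoc]; exact hxy.add_one) hj
    refine ⟨(SimpleGraph.Walk.cons (adj_up x y hxy) p).copy rfl
      (Prod.ext (by ring) (by ring)), ?_⟩
    simp [hp]
  · intro j hj
    rcases le_or_gt j k with hjk | hjk
    · obtain ⟨p, hp⟩ := exists_walk_zigzag_down hxy hjk
      exact ⟨(p.concat (adj_sub_one _ _)).copy rfl (Prod.ext (by ring) rfl), by simp [hp]⟩
    · obtain ⟨p, hp⟩ := exists_walk_zigzag_down hxy (le_refl k)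
      refine ⟨(p.concat (adj_add_one _ _)).copy rfl (Prod.ext ?_ rfl), by simp [hp]⟩
      rw [show j = k + 1 by omega]
      push_cast
      ring

/-- for x+y even, paths of length exactly 2k+1 from (x,y) to
(x−k+2j, y+k+1) for 0 ≤ j ≤ k, and to (x−k−1+2j, y−k) for 0 ≤ j ≤ k+1. -/
theorem hex_odd_paths_even_vertex (k : ℕ) (hk : 0 < k) (x y : ℤ) (hxy : Even (x + y)) :
    (∀ j : ℕ, j ≤ k →
      ∃ p : hexGraph.Walk (x, y) (x - k + 2 * j, y + k + 1), p.length = 2 * k + 1) ∧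
    (∀ j : ℕ, j ≤ k + 1 →
      ∃ p : hexGraph.Walk (x, y) (x - k - 1 + 2 * j, y - k), p.length = 2 * k + 1) :=
  hex_odd_paths_even_vertex_general k x y hxy
end

section
/- Let r ≥ 2 be even, and let C' ∩ L_0 = {(x,0) : x mod 3r ∉ {1,3,5,…,r−1}}. If u, v ∈ L_0 with u ≠ v and neither u nor v in C', then the distance in the hexagonal grid between u and v is either strictly less than r or at least 2r+2. In particular: (a) if u and v are adjacent then at least one lies in C'; (b) if r ≤ d(u,v) ≤ 2r+1 then at least one of u, v lies in C'. -/
/-- Membership of the column x in the row codeword set for even r: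
x mod 3r is not one of the excluded odd residues 1,3,…,r−1. -/
def inCodeRowEven (r x : ℤ) : Prop := ¬ (Odd (x % (3 * r)) ∧ x % (3 * r) < r)

/-!
Distances along a row of the brick wall are differences of x-coordinates: horizontal edges
realise them, and no edge changes the x-coordinate by more than one.  A column outside the code
has an odd residue in `[1, r - 1]` modulo `3r`.  Two such columns in the same period of length
`3r` are at even distance at most `r - 2`; in different periods they are at distance at least
`3r - (r - 2) = 2r + 2`.  Adjacent columns are at odd distance `1`, so they cannot both be
outside the code.
-/

lemma hexGraph_adj_same_snd_iff {u v y : ℤ} :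
    hexGraph.Adj (u, y) (v, y) ↔ |u - v| = 1 := by
  rw [abs_eq zero_le_one]
  constructor
  · rintro (⟨-, h⟩ | ⟨-, ⟨h, -⟩ | ⟨h, -⟩⟩) <;> omega
  · exact fun h => Or.inl ⟨rfl, by omega⟩

lemma hexGraph_adj_natAbs_fst_sub_le_one {a b : ℤ × ℤ} (h : hexGraph.Adj a b) :
    (a.1 - b.1).natAbs ≤ 1 := by
  rcases h with ⟨-, h | h⟩ | ⟨h, -⟩ <;> omega

lemma natAbs_fst_sub_le_length {a b : ℤ × ℤ} (p : hexGraph.Walk a b) :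
    (a.1 - b.1).natAbs ≤ p.length := by
  induction p with
  | nil => simp
  | cons h _ ih =>
    have := hexGraph_adj_natAbs_fst_sub_le_one h
    rw [SimpleGraph.Walk.length_cons]
    omega

lemma exists_walk_same_snd_length_eq {u v : ℤ} (y : ℤ) {n : ℕ} (h : v - u = n) :
    ∃ p : hexGraph.Walk (u, y) (v, y), p.length = n := by
  induction n generalizing v with
  | zero =>
    obtain rfl : v = u := by omega
    exact ⟨.nil, rfl⟩
  | succ n ih =>
    obtain ⟨p, hp⟩ := ih (v := v - 1) (by omega)
    have hadj : hexGraph.Adj (v - 1, y) (v, y) := hexGraph_adj_same_snd_iff.mpr (by simp)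
    exact ⟨p.concat hadj, by simp [hp]⟩

theorem hexGraph_dist_same_snd (u v y : ℤ) :
    hexGraph.dist (u, y) (v, y) = (u - v).natAbs := by
  wlog huv : u ≤ v generalizing u v
  · rw [SimpleGraph.dist_comm, this v u (by omega)]
    omega
  obtain ⟨p, hp⟩ := exists_walk_same_snd_length_eq y (show v - u = (v - u).toNat by omega)
  obtain ⟨q, hq⟩ := p.reachable.exists_walk_length_eq_dist
  refine le_antisymm ?_ (hq ▸ natAbs_fst_sub_le_length q)
  calc hexGraph.dist (u, y) (v, y) ≤ p.length := SimpleGraph.dist_le p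
    _ = (u - v).natAbs := by omega

lemma sub_eq_emod_sub_emod_or_le_abs_add {m : ℤ} (hm : 0 < m) (u v : ℤ) :
    u - v = u % m - v % m ∨ m ≤ |u - v| + |u % m - v % m| := by
  have hsub : u - v = m * (u / m - v / m) + (u % m - v % m) := by
    have := Int.mul_ediv_add_emod u m
    have := Int.mul_ediv_add_emod v m
    linarith
  rcases lt_trichotomy (u / m - v / m) 0 with hk | hk | hk
  · have : m * (u / m - v / m) ≤ -m := by nlinarith
    right
    cases abs_cases (u - v) <;> cases abs_cases (u % m - v % m) <;> linarith
  · left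
    simpa [hk] using hsub
  · have : m ≤ m * (u / m - v / m) := by nlinarith
    right
    cases abs_cases (u - v) <;> cases abs_cases (u % m - v % m) <;> linarith

lemma abs_sub_le_or_le_of_not_inCodeRowEven {r u v : ℤ} (hr : 0 < r)
    (hu : ¬ inCodeRowEven r u) (hv : ¬ inCodeRowEven r v) :
    (Even (u - v) ∧ |u - v| ≤ r - 2) ∨ 2 * r + 2 ≤ |u - v| := by
  rw [inCodeRowEven, not_not] at hu hv
  obtain ⟨⟨i, hi⟩, hu⟩ := hu
  obtain ⟨⟨j, hj⟩, hv⟩ := hv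
  have hi0 := Int.emod_nonneg u (show 3 * r ≠ 0 by omega)
  have hj0 := Int.emod_nonneg v (show 3 * r ≠ 0 by omega)
  have hres : |u % (3 * r) - v % (3 * r)| ≤ r - 2 := abs_le.mpr ⟨by omega, by omega⟩
  rcases sub_eq_emod_sub_emod_or_le_abs_add (show 0 < 3 * r by omega) u v with h | h
  · exact Or.inl ⟨⟨i - j, by omega⟩, h ▸ hres⟩
  · exact Or.inr (by linarith)

theorem hex_codeword_row_even_general (r : ℤ) (hr : 2 ≤ r) :
    (∀ u v : ℤ, u ≠ v → ¬ inCodeRowEven r u → ¬ inCodeRowEven r v →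
      (hexGraph.dist (u, 0) (v, 0) : ℤ) < r ∨
        2 * r + 2 ≤ (hexGraph.dist (u, 0) (v, 0) : ℤ)) ∧
    (∀ u v : ℤ, hexGraph.Adj (u, 0) (v, 0) → inCodeRowEven r u ∨ inCodeRowEven r v) ∧
    (∀ u v : ℤ, r ≤ (hexGraph.dist (u, 0) (v, 0) : ℤ) →
      (hexGraph.dist (u, 0) (v, 0) : ℤ) ≤ 2 * r + 1 →
      inCodeRowEven r u ∨ inCodeRowEven r v) := by
  simp only [hexGraph_dist_same_snd, Int.natCast_natAbs, hexGraph_adj_same_snd_iff]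
  refine ⟨fun u v _ hu hv => ?_, fun u v hadj => ?_, fun u v hr₁ hr₂ => ?_⟩
  · rcases abs_sub_le_or_le_of_not_inCodeRowEven (by omega) hu hv with ⟨-, hle⟩ | hge
    · exact Or.inl (by omega)
    · exact Or.inr hge
  · by_contra! ⟨hu, hv⟩
    rcases abs_sub_le_or_le_of_not_inCodeRowEven (by omega) hu hv with ⟨⟨k, hk⟩, -⟩ | hge
    · cases abs_cases (u - v) <;> omega
    · omega
  · by_contra! ⟨hu, hv⟩
    rcases abs_sub_le_or_le_of_not_inCodeRowEven (by omega) hu hv with ⟨-, hle⟩ | hge <;> omega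

/-- for even r ≥ 2, non-codewords on L₀ are at distance < r or ≥ 2r+2;
in particular adjacent vertices of L₀ contain a codeword, and any two vertices of L₀
at distance between r and 2r+1 contain a codeword. -/
theorem hex_codeword_row_even (r : ℤ) (hr : 2 ≤ r) (hre : Even r) :
    (∀ u v : ℤ, u ≠ v → ¬ inCodeRowEven r u → ¬ inCodeRowEven r v →
      (hexGraph.dist (u, 0) (v, 0) : ℤ) < r ∨
        2 * r + 2 ≤ (hexGraph.dist (u, 0) (v, 0) : ℤ)) ∧
    (∀ u v : ℤ, hexGraph.Adj (u, 0) (v, 0) → inCodeRowEven r u ∨ inCodeRowEven r v) ∧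
    (∀ u v : ℤ, r ≤ (hexGraph.dist (u, 0) (v, 0) : ℤ) →
      (hexGraph.dist (u, 0) (v, 0) : ℤ) ≤ 2 * r + 1 →
      inCodeRowEven r u ∨ inCodeRowEven r v) :=
  hex_codeword_row_even_general r hr
end

section
/- Let r be odd, n even, and let v = (i,j) with n(r+1) < j < (n+1)(r+1). Then d(v, L_{(r+1)/2 + n(r+1)}) ≤ r−1, and consequently, with δ = |j − ((r+1)/2 + n(r+1))|, the set {(i − (r − δ) + t, (r+1)/2+n(r+1)) : t = 0,…,2(r−δ)} ⊆ B_r(v), and this set has at least r+1 elements, hence contains a vertex with first coordinate divisible by r+1. -/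
/-- there is a walk of length at most n -/
def DLE (u v : ℤ × ℤ) (m : ℕ) : Prop := ∃ p : hexGraph.Walk u v, p.length ≤ m

lemma DLE.refl (u : ℤ × ℤ) : DLE u u 0 := ⟨SimpleGraph.Walk.nil, le_refl _⟩

lemma DLE.mono {u v m m'} (h : DLE u v m) (hm : m ≤ m') : DLE u v m' :=
  h.imp fun _ hp => hp.trans hm

lemma DLE.trans {u v w m n} (h1 : DLE u v m) (h2 : DLE v w n) : DLE u w (m + n) := by
  obtain ⟨p, hp⟩ := h1; obtain ⟨q, hq⟩ := h2
  exact ⟨p.append q, by rw [SimpleGraph.Walk.length_append]; omega⟩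

lemma DLE.of_adj {u v} (h : hexGraph.Adj u v) : DLE u v 1 :=
  ⟨SimpleGraph.Walk.cons h SimpleGraph.Walk.nil, le_refl _⟩

lemma dist_le_of_DLE {u v m} (h : DLE u v m) : hexGraph.dist u v ≤ m := by
  obtain ⟨p, hp⟩ := h
  exact (SimpleGraph.dist_le p).trans hp

lemma adj_horiz (x y ε : ℤ) (hε : ε.natAbs = 1) : hexGraph.Adj (x, y) (x + ε, y) := by
  refine Or.inl ⟨rfl, ?_⟩
  rcases Int.natAbs_eq_iff.mp hε with h | h <;> [right; left] <;> simp <;> omega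

lemma adj_up (x y : ℤ) (h : (x + y) % 2 = 0) : hexGraph.Adj (x, y) (x, y + 1) :=
  Or.inr ⟨rfl, Or.inl ⟨rfl, Int.even_iff.mpr h⟩⟩

lemma adj_down (x y : ℤ) (h : (x + y) % 2 = 1) : hexGraph.Adj (x, y) (x, y - 1) := by
  refine Or.inr ⟨rfl, Or.inr ⟨by ring, ?_⟩⟩
  exact Int.even_iff.mpr (by simp only []; omega)

lemma dle_horiz : ∀ (d : ℕ) (x y a : ℤ), a.natAbs = d → DLE (x, y) (x + a, y) d := by
  intro d
  induction d with
  | zero => intro x y a ha; obtain rfl : a = 0 := by omega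
            rw [add_zero]; exact DLE.refl _
  | succ d ih =>
    intro x y a ha
    obtain ⟨ε, hε, hrest⟩ : ∃ ε : ℤ, ε.natAbs = 1 ∧ (a - ε).natAbs = d := by
      rcases le_or_gt 0 a with h | h
      · exact ⟨1, rfl, by omega⟩
      · exact ⟨-1, by decide, by omega⟩
    have h1 : DLE (x, y) (x + ε, y) 1 := DLE.of_adj (adj_horiz x y ε hε)
    have h2 := ih (x + ε) y (a - ε) hrest
    rw [show x + ε + (a - ε) = x + a by ring] at h2
    exact (h1.trans h2).mono (by omega)

lemma dle_diag (x y ε η : ℤ) (hε : ε.natAbs = 1) (hη : η.natAbs = 1) :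
    DLE (x, y) (x + ε, y + η) 2 := by
  have hη' : η = 1 ∨ η = -1 := by omega
  rcases hη' with rfl | rfl
  · rcases Int.emod_two_eq_zero_or_one (x + y) with he | ho
    · exact (DLE.of_adj (adj_up x y he)).trans (DLE.of_adj (adj_horiz x (y+1) ε hε))
    · have h1 : DLE (x, y) (x + ε, y) 1 := DLE.of_adj (adj_horiz x y ε hε)
      have h2 : DLE (x + ε, y) (x + ε, y + 1) 1 :=
        DLE.of_adj (adj_up (x + ε) y (by omega))
      exact h1.trans h2
  · rcases Int.emod_two_eq_zero_or_one (x + y) with he | ho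
    · have h1 : DLE (x, y) (x + ε, y) 1 := DLE.of_adj (adj_horiz x y ε hε)
      have h2 : DLE (x + ε, y) (x + ε, y - 1) 1 :=
        DLE.of_adj (adj_down (x + ε) y (by omega))
      rw [show y - 1 = y + (-1) by ring] at h2
      exact h1.trans h2
    · have h1 : DLE (x, y) (x, y - 1) 1 := DLE.of_adj (adj_down x y ho)
      have h2 : DLE (x, y - 1) (x + ε, y - 1) 1 := DLE.of_adj (adj_horiz x (y-1) ε hε)
      rw [show y - 1 = y + (-1) by ring] at h1 h2
      exact h1.trans h2

lemma dle_main : ∀ (h : ℕ) (x y a b : ℤ), b.natAbs = h → h ≤ a.natAbs →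
    DLE (x, y) (x + a, y + b) (a.natAbs + h) := by
  intro h
  induction h with
  | zero => intro x y a b hb _; obtain rfl : b = 0 := by omega
            rw [add_zero y]; simpa using dle_horiz a.natAbs x y a rfl
  | succ h ih =>
    intro x y a b hb hab
    obtain ⟨ε, hε, hεr⟩ : ∃ ε : ℤ, ε.natAbs = 1 ∧ (a - ε).natAbs = a.natAbs - 1 := by
      rcases le_or_gt 0 a with hc | hc
      · exact ⟨1, rfl, by omega⟩
      · exact ⟨-1, by decide, by omega⟩
    obtain ⟨η, hη, hηr⟩ : ∃ η : ℤ, η.natAbs = 1 ∧ (b - η).natAbs = h := by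
      rcases le_or_gt 0 b with hc | hc
      · exact ⟨1, rfl, by omega⟩
      · exact ⟨-1, by decide, by omega⟩
    have h1 : DLE (x, y) (x + ε, y + η) 2 := dle_diag x y ε η hε hη
    have h2 := ih (x + ε) (y + η) (a - ε) (b - η) hηr (by omega)
    rw [show x + ε + (a - ε) = x + a by ring, show y + η + (b - η) = y + b by ring] at h2
    exact (h1.trans h2).mono (by omega)

lemma dle_vert : ∀ (h : ℕ) (x y b : ℤ), b.natAbs = h → DLE (x, y) (x, y + b) (2 * h + 1) := by
  intro h
  induction h using Nat.strong_induction_on with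
  | _ h ih =>
    intro x y b hb
    match h, hb with
    | 0, hb => obtain rfl : b = 0 := by omega
               rw [add_zero]; exact (DLE.refl _).mono (by omega)
    | 1, hb =>
      have h1 : DLE (x, y) (x + 1, y + b) 2 := dle_diag x y 1 b rfl hb
      have h2 : DLE (x + 1, y + b) (x + 1 + (-1), y + b) 1 := DLE.of_adj (adj_horiz _ _ _ rfl)
      rw [show x + 1 + (-1) = x by ring] at h2
      exact (h1.trans h2).mono (by omega)
    | (h + 2), hb =>
      obtain ⟨η, hη, hηr⟩ : ∃ η : ℤ, η.natAbs = 1 ∧ (b - 2 * η).natAbs = h := by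
        rcases le_or_gt 0 b with hc | hc
        · exact ⟨1, rfl, by omega⟩
        · exact ⟨-1, by decide, by omega⟩
      have h1 : DLE (x, y) (x + 1, y + η) 2 := dle_diag x y 1 η rfl hη
      have h2 : DLE (x + 1, y + η) (x + 1 + (-1), y + η + η) 2 :=
        dle_diag (x + 1) (y + η) (-1) η rfl hη
      have h3 := ih h (by omega) x (y + η + η) (b - 2 * η) hηr
      rw [show x + 1 + (-1) = x by ring] at h2
      rw [show y + η + η + (b - 2 * η) = y + b by ring] at h3
      exact ((h1.trans h2).trans h3).mono (by omega)

lemma dle_any (h : ℕ) (x y a b : ℤ) (hb : b.natAbs = h) (hab : a.natAbs ≤ h) :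
    DLE (x, y) (x + a, y + b) (2 * h + 1) := by
  obtain ⟨b', hb'1, hb'2⟩ : ∃ b' : ℤ, b'.natAbs = a.natAbs ∧ (b - b').natAbs = h - a.natAbs := by
    rcases le_or_gt 0 b with hc | hc
    · exact ⟨(a.natAbs : ℤ), by omega, by omega⟩
    · exact ⟨-(a.natAbs : ℤ), by omega, by omega⟩
  have h1 : DLE (x, y) (x + a, y + b') (a.natAbs + a.natAbs) :=
    dle_main a.natAbs x y a b' hb'1 le_rfl
  have h2 := dle_vert (h - a.natAbs) (x + a) (y + b') (b - b') hb'2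
  rw [show y + b' + (b - b') = y + b by ring] at h2
  exact (h1.trans h2).mono (by omega)

/-- for odd r, even n, and n(r+1) < j < (n+1)(r+1), the vertex (i,j)
is within distance r−1 of the line L_{(r+1)/2+n(r+1)}; moreover, with
δ = |j − ((r+1)/2 + n(r+1))|, the 2(r−δ)+1 consecutive vertices of that line centered
at first coordinate i lie in B_r((i,j)), this set has at least r+1 elements, and hence
contains a vertex whose first coordinate is divisible by r+1. -/
theorem hex_middle_line_codeword (r : ℤ) (hr : 0 < r) (hro : Odd r)
    (n : ℤ) (hn : Even n) (i j : ℤ)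
    (hj1 : n * (r + 1) < j) (hj2 : j < (n + 1) * (r + 1)) :
    (hexLineDist (i, j) ((r + 1) / 2 + n * (r + 1)) : ℤ) ≤ r - 1 ∧
    (∀ t : ℤ, 0 ≤ t → t ≤ 2 * (r - |j - ((r + 1) / 2 + n * (r + 1))|) →
      (hexGraph.dist (i, j)
        (i - (r - |j - ((r + 1) / 2 + n * (r + 1))|) + t,
          (r + 1) / 2 + n * (r + 1)) : ℤ) ≤ r) ∧
    r + 1 ≤ 2 * (r - |j - ((r + 1) / 2 + n * (r + 1))|) + 1 ∧
    (∃ m : ℤ, i - (r - |j - ((r + 1) / 2 + n * (r + 1))|) ≤ m ∧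
      m ≤ i + (r - |j - ((r + 1) / 2 + n * (r + 1))|) ∧ (r + 1) ∣ m ∧
      (hexGraph.dist (i, j) (m, (r + 1) / 2 + n * (r + 1)) : ℤ) ≤ r) := by
  obtain ⟨s, hs⟩ := hro
  have hj2' : j < n * (r + 1) + (r + 1) := by
    have e : (n + 1) * (r + 1) = n * (r + 1) + (r + 1) := by ring
    omega
  set k : ℤ := (r + 1) / 2 + n * (r + 1) with hk
  set D : ℕ := (k - j).natAbs with hDdef
  have habs : |j - k| = (D : ℤ) := by
    rw [Int.abs_eq_natAbs]; omega
  have hkval : k = s + 1 + n * (r + 1) := by omega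
  have hD : (D : ℤ) ≤ s := by omega
  have key : ∀ a : ℤ, (a.natAbs : ℤ) ≤ r - (D : ℤ) →
      (hexGraph.dist (i, j) (i + a, k) : ℤ) ≤ r := by
    intro a ha
    rcases le_or_gt D a.natAbs with hc | hc
    · have h1 := dle_main D i j a (k - j) rfl hc
      rw [show j + (k - j) = k by ring] at h1
      have := dist_le_of_DLE h1
      omega
    · have h1 := dle_any D i j a (k - j) rfl (le_of_lt hc)
      rw [show j + (k - j) = k by ring] at h1
      have := dist_le_of_DLE h1
      omega
  refine ⟨?_, ?_, ?_, ?_⟩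
  · -- line distance ≤ r - 1
    have mem : hexGraph.dist (i, j) (i + (k - j), k) ∈
        {m : ℕ | ∃ x : ℤ, hexGraph.dist (i, j) (x, k) = m} := ⟨i + (k - j), rfl⟩
    have h1 : hexLineDist (i, j) k ≤ hexGraph.dist (i, j) (i + (k - j), k) :=
      Nat.sInf_le mem
    have h2 := dle_main D i j (k - j) (k - j) rfl (le_refl D)
    rw [show j + (k - j) = k by ring] at h2
    have h3 := dist_le_of_DLE h2
    omega
  · intro t ht1 ht2
    rw [habs] at ht2 ⊢
    rw [show i - (r - (D : ℤ)) + t = i + (t - (r - (D : ℤ))) by ring]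
    exact key _ (by omega)
  · rw [habs]; omega
  · rw [habs]
    set X : ℤ := i + (r - (D : ℤ)) with hX
    have e1 : 0 ≤ X % (r + 1) := Int.emod_nonneg _ (by omega)
    have e2 : X % (r + 1) < r + 1 := Int.emod_lt_of_pos _ (by omega)
    have edm : (r + 1) * (X / (r + 1)) + X % (r + 1) = X := Int.mul_ediv_add_emod X (r + 1)
    refine ⟨X - X % (r + 1), by omega, by omega, ⟨X / (r + 1), by omega⟩, ?_⟩
    rw [show X - X % (r + 1) = i + (X - X % (r + 1) - i) by ring]
    exact key _ (by omega)
end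

section
/- Let r be a positive integer, and let u = (x, 0) and v = (x', y') be vertices of the hexagonal grid with y' > 0 and x < x'. Then neither (x−r, 0) nor (x−r+1, 0) lies in B_r(v), while both lie in B_r(u). -/
/-!
Every edge of the hexagonal grid is a unit step of ℤ², so graph distance dominates ℓ¹ distance;
along a row the horizontal path realises the ℓ¹ distance exactly. The two witnesses are within
distance `r` of `u` along row 0, while reaching `v` costs at least the vertical drop `y' ≥ 1` plus a
horizontal run of at least `r`.
-/

namespace SimpleGraph

variable {V : Type*} {G : SimpleGraph V}

lemma exists_walk_length_eq_of_adj_succ (f : ℤ → V) (hf : ∀ n, G.Adj (f n) (f (n + 1)))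
    {m n : ℤ} (hmn : m ≤ n) : ∃ w : G.Walk (f m) (f n), w.length = (n - m).toNat := by
  induction n, hmn using Int.leInduction with
  | base => exact ⟨.nil, by simp⟩
  | succ n _ ih =>
    obtain ⟨w, hw⟩ := ih
    exact ⟨w.concat (hf n), by rw [Walk.length_concat, hw]; omega⟩

lemma dist_le_natAbs_sub_of_adj_succ (f : ℤ → V) (hf : ∀ n, G.Adj (f n) (f (n + 1)))
    (m n : ℤ) : G.dist (f m) (f n) ≤ (m - n).natAbs := by
  wlog hmn : m ≤ n generalizing m n
  · rw [dist_comm, ← Int.natAbs_neg, neg_sub]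
    exact this n m (by omega)
  obtain ⟨w, hw⟩ := exists_walk_length_eq_of_adj_succ f hf hmn
  exact (dist_le w).trans (by omega)

lemma reachable_of_reachable_succ (f : ℤ → V) (hf : ∀ n, G.Reachable (f n) (f (n + 1)))
    (m n : ℤ) : G.Reachable (f m) (f n) := by
  wlog hmn : m ≤ n generalizing m n
  · exact (this n m (by omega)).symm
  induction n, hmn using Int.leInduction with
  | base => rfl
  | succ n _ ih => exact ih.trans (hf n)

end SimpleGraph

open SimpleGraph

lemma hexGraph_adj_add_one_fst (a y : ℤ) : hexGraph.Adj (a, y) (a + 1, y) :=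
  Or.inl ⟨rfl, Or.inr rfl⟩

lemma hexGraph_reachable_of_snd_eq (y a b : ℤ) : hexGraph.Reachable (a, y) (b, y) :=
  reachable_of_reachable_succ (fun n ↦ (n, y)) (fun n ↦ (hexGraph_adj_add_one_fst n y).reachable) a b

lemma hexGraph_reachable_add_one_snd (a y : ℤ) : hexGraph.Reachable (a, y) (a, y + 1) := by
  obtain ⟨b, hb⟩ : ∃ b, Even (b + y) := ⟨-y, by simp⟩
  have up : hexGraph.Adj (b, y) (b, y + 1) := Or.inr ⟨rfl, Or.inl ⟨rfl, hb⟩⟩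
  exact ((hexGraph_reachable_of_snd_eq y a b).trans up.reachable).trans
    (hexGraph_reachable_of_snd_eq (y + 1) b a)

lemma hexGraph_connected : hexGraph.Connected :=
  (connected_iff_exists_forall_reachable _).mpr ⟨(0, 0), fun ⟨a, b⟩ ↦
    (reachable_of_reachable_succ (fun n ↦ (0, n)) (hexGraph_reachable_add_one_snd 0) 0 b).trans
      (hexGraph_reachable_of_snd_eq b 0 a)⟩

lemma hexGraph_natAbs_add_natAbs_le_length {u v : ℤ × ℤ} (w : hexGraph.Walk u v) :
    (u.1 - v.1).natAbs + (u.2 - v.2).natAbs ≤ w.length := by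
  induction w with
  | nil => simp
  | cons h _ ih =>
    rw [Walk.length_cons]
    rcases h with ⟨_, _ | _⟩ | ⟨_, ⟨_, _⟩ | ⟨_, _⟩⟩ <;> omega

lemma hexGraph_natAbs_add_natAbs_le_dist (u v : ℤ × ℤ) :
    (u.1 - v.1).natAbs + (u.2 - v.2).natAbs ≤ hexGraph.dist u v := by
  obtain ⟨w, hw⟩ := hexGraph_connected.exists_walk_length_eq_dist u v
  exact hw ▸ hexGraph_natAbs_add_natAbs_le_length w

lemma hexGraph_dist_of_snd_eq (y a b : ℤ) : hexGraph.dist (a, y) (b, y) = (a - b).natAbs :=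
  le_antisymm
    (dist_le_natAbs_sub_of_adj_succ (fun n ↦ (n, y)) (fun n ↦ hexGraph_adj_add_one_fst n y) a b)
    (by simpa using hexGraph_natAbs_add_natAbs_le_dist (a, y) (b, y))

/-- for u = (x,0) and v = (x',y') with y' > 0 and x < x', the vertices
(x−r,0) and (x−r+1,0) lie in B_r(u) but not in B_r(v). -/
theorem hex_left_witnesses (r : ℕ) (hr : 0 < r) (x x' y' : ℤ)
    (hy : 0 < y') (hx : x < x') :
    hexGraph.dist (x - r, 0) (x, 0) ≤ r ∧
    hexGraph.dist (x - r + 1, 0) (x, 0) ≤ r ∧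
    ¬ hexGraph.dist (x - r, 0) (x', y') ≤ r ∧
    ¬ hexGraph.dist (x - r + 1, 0) (x', y') ≤ r := by
  have far (a : ℤ) (ha : a ≤ x - r + 1) : ¬ hexGraph.dist (a, 0) (x', y') ≤ r := by
    have := hexGraph_natAbs_add_natAbs_le_dist (a, 0) (x', y')
    omega
  refine ⟨?_, ?_, far _ (by omega), far _ le_rfl⟩ <;> rw [hexGraph_dist_of_snd_eq] <;> omega
end
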